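/- arXiv:2001.09611 — 2 statements merged into one kernel-verified Lean document; each statement's English description precedes it below -/
import Mathlib

section
/- Suppose (α, μ, P) is non-isolated, and let γ be a nonnegative vector with γ ≥ α + (γ ∧ μ)P entrywise. Then for every communicating class C of P that can be filled but cannot be drained, there exists i ∈ C with γ_i > μ_i. Consequently, the set S = {i : γ_i < μ_i} satisfies σ(P_{SS}) < 1. -/
open scoped Classical

/-- `i` and `j` communicate under the nonnegative matrix `P`. -/
def Communicates {n : ℕ} (P : Matrix (Fin n) (Fin n) ℝ) (i j : Fin n) : Prop :=
  i = j ∨ ((∃ k ≥ 1, 0 < (P ^ k) i j) ∧ (∃ l ≥ 1, 0 < (P ^ l) j i))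

/-- `C` is a communicating class of `P`. -/
def IsCommClass {n : ℕ} (P : Matrix (Fin n) (Fin n) ℝ) (C : Set (Fin n)) : Prop :=
  ∃ i, C = {j | Communicates P i j}

/-- The class `C` can be filled: exogenous input reaches it directly or
through routing. -/
def CanBeFilled {n : ℕ} (α : Fin n → ℝ) (P : Matrix (Fin n) (Fin n) ℝ)
    (C : Set (Fin n)) : Prop :=
  (∃ i ∈ C, 0 < α i) ∨ (∃ j, 0 < α j ∧ ∃ l ∈ C, ∃ k ≥ 1, 0 < (P ^ k) j l)

/-- The class `C` can be drained: externally (a row sum in `C` is `< 1`) or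
internally (positive routing out of `C`). -/
def CanBeDrained {n : ℕ} (P : Matrix (Fin n) (Fin n) ℝ) (C : Set (Fin n)) : Prop :=
  (∃ i ∈ C, ∑ j, P i j < 1) ∨ (∃ i ∈ C, ∃ j ∉ C, 0 < P i j)

/-- The network `(α, μ, P)` is non-isolated (NI): every communicating class of
`P` can be filled or drained. -/
def NI {n : ℕ} (α : Fin n → ℝ) (P : Matrix (Fin n) (Fin n) ℝ) : Prop :=
  ∀ C, IsCommClass P C → CanBeFilled α P C ∨ CanBeDrained P C

/-- `P` with all rows and columns outside `A` zeroed out (the matrix `P_{AA}`). -/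
noncomputable def restrict {n : ℕ} (P : Matrix (Fin n) (Fin n) ℝ) (A : Set (Fin n)) :
    Matrix (Fin n) (Fin n) ℝ :=
  fun i j => if i ∈ A ∧ j ∈ A then P i j else 0

/-- The spectral radius of a real matrix is `< 1`: all complex eigenvalues
have absolute value `< 1`. -/
def SpecLtOne {n : ℕ} (M : Matrix (Fin n) (Fin n) ℝ) : Prop :=
  ∀ z ∈ spectrum ℂ (M.map (Complex.ofReal)), ‖z‖ < 1

section Aux
variable {n : ℕ} {P : Matrix (Fin n) (Fin n) ℝ}

lemma pow_entry_nonneg (hP : ∀ i j, 0 ≤ P i j) : ∀ k (i j : Fin n), 0 ≤ (P ^ k) i j := by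
  intro k
  induction k with
  | zero => intro i j; simp [Matrix.one_apply]; split_ifs <;> norm_num
  | succ k ih =>
    intro i j
    rw [pow_succ, Matrix.mul_apply]
    exact Finset.sum_nonneg fun m _ => mul_nonneg (ih i m) (hP m j)

lemma exists_step (hP : ∀ i j, 0 ≤ P i j) {k : ℕ} {i j : Fin n}
    (h : 0 < (P ^ (k + 1)) i j) : ∃ m, 0 < (P ^ k) i m ∧ 0 < P m j := by
  rw [pow_succ, Matrix.mul_apply] at h
  by_contra hc
  push_neg at hc
  have : ∑ m, (P ^ k) i m * P m j ≤ 0 := by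
    apply Finset.sum_nonpos
    intro m _
    rcases lt_or_ge 0 ((P ^ k) i m) with h1 | h1
    · have := hc m h1
      have h2 : P m j = 0 := le_antisymm this (hP m j)
      simp [h2]
    · exact mul_nonpos_of_nonpos_of_nonneg h1 (hP m j)
  linarith

lemma reach_trans (hP : ∀ i j, 0 ≤ P i j) {a b : ℕ} {i m j : Fin n}
    (h1 : 0 < (P ^ a) i m) (h2 : 0 < (P ^ b) m j) : 0 < (P ^ (a + b)) i j := by
  rw [pow_add, Matrix.mul_apply]
  calc (0:ℝ) < (P ^ a) i m * (P ^ b) m j := mul_pos h1 h2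
  _ ≤ ∑ l, (P ^ a) i l * (P ^ b) l j := by
      apply Finset.single_le_sum (f := fun l => (P ^ a) i l * (P ^ b) l j)
        (fun l _ => mul_nonneg (pow_entry_nonneg hP a i l) (pow_entry_nonneg hP b l j))
        (Finset.mem_univ m)

lemma row_pow_le_one (hP : ∀ i j, 0 ≤ P i j) (hPsub : ∀ i, ∑ j, P i j ≤ 1) :
    ∀ k (i : Fin n), ∑ j, (P ^ k) i j ≤ 1 := by
  intro k
  induction k with
  | zero => intro i; simp [Matrix.one_apply]
  | succ k ih =>
    intro i
    have : ∀ j, (P ^ (k + 1)) i j = ∑ m, P i m * (P ^ k) m j := by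
      intro j; rw [pow_succ', Matrix.mul_apply]
    calc ∑ j, (P ^ (k + 1)) i j = ∑ j, ∑ m, P i m * (P ^ k) m j := by
          exact Finset.sum_congr rfl fun j _ => this j
    _ = ∑ m, P i m * ∑ j, (P ^ k) m j := by
          rw [Finset.sum_comm]
          exact Finset.sum_congr rfl fun m _ => (Finset.mul_sum _ _ _).symm
    _ ≤ ∑ m, P i m * 1 :=
          Finset.sum_le_sum fun m _ => mul_le_mul_of_nonneg_left (ih m) (hP i m)
    _ = ∑ m, P i m := by simp
    _ ≤ 1 := hPsub i

lemma row_pow_add_le (hP : ∀ i j, 0 ≤ P i j) (hPsub : ∀ i, ∑ j, P i j ≤ 1)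
    (a b : ℕ) (i : Fin n) : ∑ j, (P ^ (a + b)) i j ≤ ∑ j, (P ^ a) i j := by
  have : ∀ j, (P ^ (a + b)) i j = ∑ m, (P ^ a) i m * (P ^ b) m j := by
    intro j; rw [pow_add, Matrix.mul_apply]
  calc ∑ j, (P ^ (a + b)) i j = ∑ m, (P ^ a) i m * ∑ j, (P ^ b) m j := by
        rw [Finset.sum_congr rfl fun j _ => this j, Finset.sum_comm]
        exact Finset.sum_congr rfl fun m _ => (Finset.mul_sum _ _ _).symm
  _ ≤ ∑ m, (P ^ a) i m * 1 :=
        Finset.sum_le_sum fun m _ => mul_le_mul_of_nonneg_left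
          (row_pow_le_one hP hPsub b m) (pow_entry_nonneg hP a i m)
  _ = ∑ m, (P ^ a) i m := by simp

lemma leaky_step (hP : ∀ i j, 0 ≤ P i j) (hPsub : ∀ i, ∑ j, P i j ≤ 1)
    {m : ℕ} {i j0 : Fin n} (hpos : 0 < (P ^ m) i j0) (hlt : ∑ l, P j0 l < 1) :
    ∑ l, (P ^ (m + 1)) i l < 1 := by
  have hexp : ∀ l, (P ^ (m + 1)) i l = ∑ j, (P ^ m) i j * P j l := by
    intro l; rw [pow_succ, Matrix.mul_apply]
  have h1 : ∑ l, (P ^ (m + 1)) i l = ∑ j, (P ^ m) i j * ∑ l, P j l := by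
    rw [Finset.sum_congr rfl fun l _ => hexp l, Finset.sum_comm]
    exact Finset.sum_congr rfl fun j _ => (Finset.mul_sum _ _ _).symm
  rw [h1]
  have h2 : ∑ j, (P ^ m) i j * ∑ l, P j l < ∑ j, (P ^ m) i j := by
    apply Finset.sum_lt_sum
    · intro j _
      calc (P ^ m) i j * ∑ l, P j l ≤ (P ^ m) i j * 1 :=
            mul_le_mul_of_nonneg_left (hPsub j) (pow_entry_nonneg hP m i j)
      _ = (P ^ m) i j := mul_one _
    · exact ⟨j0, Finset.mem_univ j0, by
        calc (P ^ m) i j0 * ∑ l, P j0 l < (P ^ m) i j0 * 1 :=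
              (mul_lt_mul_iff_right₀ hpos).mpr hlt
        _ = (P ^ m) i j0 := mul_one _⟩
  exact lt_of_lt_of_le h2 (row_pow_le_one hP hPsub m i)

lemma reach_ne (hP : ∀ i j, 0 ≤ P i j) {a b : Fin n} (hab : a ≠ b)
    (h : ∃ k, 0 < (P ^ k) a b) : ∃ k ≥ 1, 0 < (P ^ k) a b := by
  obtain ⟨k, hk⟩ := h
  match k with
  | 0 =>
    rw [pow_zero, Matrix.one_apply_ne hab] at hk
    exact absurd hk (lt_irrefl 0)
  | k + 1 => exact ⟨k + 1, Nat.succ_le_succ (Nat.zero_le k), hk⟩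

end Aux

lemma overflow {n : ℕ} (α μ γ : Fin n → ℝ) (P : Matrix (Fin n) (Fin n) ℝ)
    (hα : ∀ i, 0 ≤ α i) (hμ : ∀ i, 0 < μ i)
    (hP : ∀ i j, 0 ≤ P i j) (hPsub : ∀ i, ∑ j, P i j ≤ 1)
    (hγ : ∀ i, 0 ≤ γ i)
    (hge : ∀ i, γ i ≥ α i + ∑ j, min (γ j) (μ j) * P j i)
    (C : Set (Fin n)) (hfill : CanBeFilled α P C) (hdrain : ¬ CanBeDrained P C) :
    ∃ i ∈ C, γ i > μ i := by
  rw [CanBeDrained] at hdrain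
  push_neg at hdrain
  obtain ⟨hd1, hd2⟩ := hdrain
  have hrow1 : ∀ i ∈ C, ∑ j, P i j = 1 := fun i hi => le_antisymm (hPsub i) (hd1 i hi)
  have hout : ∀ i ∈ C, ∀ j ∉ C, P i j = 0 := fun i hi j hj =>
    le_antisymm (hd2 i hi j hj) (hP i j)
  by_contra hcon
  push_neg at hcon
  have hmn : ∀ i, 0 ≤ min (γ i) (μ i) := fun i => le_min (hγ i) (hμ i).le
  set T : Finset (Fin n) := Finset.univ.filter (· ∈ C) with hT
  have hmemT : ∀ i, i ∈ T ↔ i ∈ C := by intro i; simp [hT]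
  have hminT : ∀ j ∈ T, min (γ j) (μ j) = γ j := by
    intro j hj; exact min_eq_left (hcon j ((hmemT j).mp hj))
  have hrowT : ∀ j ∈ T, ∑ i ∈ T, P j i = 1 := by
    intro j hj
    have : ∑ i ∈ T, P j i = ∑ i, P j i := by
      apply Finset.sum_subset (Finset.subset_univ T)
      intro x _ hx
      exact hout j ((hmemT j).mp hj) x fun hxC => hx ((hmemT x).mpr hxC)
    rw [this, hrow1 j ((hmemT j).mp hj)]
  have key : ∑ i ∈ T, γ i ≥ ∑ i ∈ T, α i + ∑ i ∈ T, γ i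
      + ∑ j ∈ Tᶜ, min (γ j) (μ j) * ∑ i ∈ T, P j i := by
    have h1 : ∑ i ∈ T, γ i ≥ ∑ i ∈ T, (α i + ∑ j, min (γ j) (μ j) * P j i) :=
      Finset.sum_le_sum fun i _ => hge i
    have h2 : ∑ i ∈ T, (α i + ∑ j, min (γ j) (μ j) * P j i)
        = ∑ i ∈ T, α i + ∑ j, min (γ j) (μ j) * ∑ i ∈ T, P j i := by
      rw [Finset.sum_add_distrib]
      congr 1
      rw [Finset.sum_comm]
      exact Finset.sum_congr rfl fun j _ => (Finset.mul_sum _ _ _).symm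
    have h3 : ∑ j, min (γ j) (μ j) * ∑ i ∈ T, P j i
        = ∑ j ∈ T, min (γ j) (μ j) * ∑ i ∈ T, P j i
          + ∑ j ∈ Tᶜ, min (γ j) (μ j) * ∑ i ∈ T, P j i := by
      rw [← Finset.sum_add_sum_compl T]
    have h4 : ∑ j ∈ T, min (γ j) (μ j) * ∑ i ∈ T, P j i = ∑ j ∈ T, γ j := by
      apply Finset.sum_congr rfl
      intro j hj
      rw [hminT j hj, hrowT j hj, mul_one]
    linarith [h1, h2.ge]
  have hαT : ∀ i ∈ T, α i = 0 := by
    have hsum : ∑ i ∈ T, α i ≤ 0 := by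
      have hleaknn : 0 ≤ ∑ j ∈ Tᶜ, min (γ j) (μ j) * ∑ i ∈ T, P j i :=
        Finset.sum_nonneg fun j _ => mul_nonneg (hmn j)
          (Finset.sum_nonneg fun i _ => hP j i)
      linarith
    intro i hi
    have := Finset.sum_nonneg (s := T) (f := α) fun i _ => hα i
    have h0 : ∑ i ∈ T, α i = 0 := le_antisymm hsum this
    exact (Finset.sum_eq_zero_iff_of_nonneg fun i _ => hα i).mp h0 i hi
  have hleak : ∀ j ∈ Tᶜ, min (γ j) (μ j) * ∑ i ∈ T, P j i = 0 := by
    have hsum : ∑ j ∈ Tᶜ, min (γ j) (μ j) * ∑ i ∈ T, P j i ≤ 0 := by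
      have := Finset.sum_nonneg (s := T) (f := α) fun i _ => hα i
      linarith
    have hnn : ∀ j ∈ Tᶜ, 0 ≤ min (γ j) (μ j) * ∑ i ∈ T, P j i := fun j _ =>
      mul_nonneg (hmn j) (Finset.sum_nonneg fun i _ => hP j i)
    intro j hj
    exact (Finset.sum_eq_zero_iff_of_nonneg hnn).mp
      (le_antisymm hsum (Finset.sum_nonneg hnn)) j hj
  have stepA : ∀ j i : Fin n, 0 < γ j → 0 < P j i → 0 < γ i := by
    intro j i hγj hPji
    have h1 : 0 < min (γ j) (μ j) * P j i :=
      mul_pos (lt_min hγj (hμ j)) hPji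
    have h2 : min (γ j) (μ j) * P j i ≤ ∑ m, min (γ m) (μ m) * P m i :=
      Finset.single_le_sum (f := fun m => min (γ m) (μ m) * P m i)
        (fun m _ => mul_nonneg (hmn m) (hP m i)) (Finset.mem_univ j)
    have := hge i
    have := hα i
    linarith
  have stepB : ∀ (k : ℕ) (j l : Fin n), 0 < γ j → 0 < (P ^ k) j l → 0 < γ l := by
    intro k
    induction k with
    | zero =>
      intro j l hγj h
      have : j = l := by
        by_contra hne
        rw [pow_zero, Matrix.one_apply_ne hne] at h
        exact lt_irrefl 0 h
      rwa [← this]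
    | succ k ih =>
      intro j l hγj h
      obtain ⟨m, hm1, hm2⟩ := exists_step hP h
      exact stepA m l (ih j m hγj hm1) hm2
  have stepC : ∀ (k : ℕ) (j l : Fin n), 0 < γ j → 0 < (P ^ k) j l → j ∉ C → l ∈ C →
      ∃ a, a ∉ C ∧ ∃ b ∈ C, 0 < P a b ∧ 0 < γ a := by
    intro k
    induction k with
    | zero =>
      intro j l hγj h hjC hlC
      have : j = l := by
        by_contra hne
        rw [pow_zero, Matrix.one_apply_ne hne] at h
        exact lt_irrefl 0 h
      exact absurd (this ▸ hlC) hjC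
    | succ k ih =>
      intro j l hγj h hjC hlC
      obtain ⟨m, hm1, hm2⟩ := exists_step hP h
      by_cases hmC : m ∈ C
      · exact ih j m hγj hm1 hjC hmC
      · exact ⟨m, hmC, l, hlC, hm2, stepB k j m hγj hm1⟩
  rcases hfill with ⟨i, hiC, hαi⟩ | ⟨j, hαj, l, hlC, k, hk1, hPk⟩
  · exact absurd (hαT i ((hmemT i).mpr hiC)) (ne_of_gt hαi)
  · have hγj : 0 < γ j := by
      have h1 : 0 ≤ ∑ m, min (γ m) (μ m) * P m j :=
        Finset.sum_nonneg fun m _ => mul_nonneg (hmn m) (hP m j)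
      have := hge j
      linarith
    by_cases hjC : j ∈ C
    · exact absurd (hαT j ((hmemT j).mpr hjC)) (ne_of_gt hαj)
    · obtain ⟨a, haC, b, hbC, hPab, hγa⟩ := stepC k j l hγj hPk hjC hlC
      have haT : a ∈ Tᶜ := by simp [hT, haC]
      have h0 := hleak a haT
      have hpos : 0 < min (γ a) (μ a) * ∑ i ∈ T, P a i := by
        apply mul_pos (lt_min hγa (hμ a))
        calc (0:ℝ) < P a b := hPab
        _ ≤ ∑ i ∈ T, P a i :=
            Finset.single_le_sum (f := fun i => P a i) (fun i _ => hP a i)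
              ((hmemT b).mpr hbC)
      linarith

/-- Every state reaches (under the restricted matrix) a leaky row. -/
lemma exists_leaky {n : ℕ} (α μ γ : Fin n → ℝ) (P : Matrix (Fin n) (Fin n) ℝ)
    (hα : ∀ i, 0 ≤ α i) (hμ : ∀ i, 0 < μ i)
    (hP : ∀ i j, 0 ≤ P i j) (hPsub : ∀ i, ∑ j, P i j ≤ 1)
    (hNI : NI α P)
    (hγ : ∀ i, 0 ≤ γ i)
    (hge : ∀ i, γ i ≥ α i + ∑ j, min (γ j) (μ j) * P j i)
    (i : Fin n) :
    ∃ m : ℕ, ∃ j0 : Fin n, 0 < ((restrict P {i | γ i < μ i}) ^ m) i j0 ∧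
      ∑ l, restrict P {i | γ i < μ i} j0 l < 1 := by
  set S : Set (Fin n) := {i | γ i < μ i} with hS
  set M : Matrix (Fin n) (Fin n) ℝ := restrict P S with hMdef
  have hMab : ∀ a b, M a b = if a ∈ S ∧ b ∈ S then P a b else 0 := fun a b => rfl
  have hM0 : ∀ a b, 0 ≤ M a b := by
    intro a b
    rw [hMab]
    split_ifs
    · exact hP a b
    · exact le_refl 0
  have hMle : ∀ a b, M a b ≤ P a b := by
    intro a b
    rw [hMab]
    split_ifs
    · exact le_refl _
    · exact hP a b
  have hMsub : ∀ a, ∑ b, M a b ≤ 1 :=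
    fun a => le_trans (Finset.sum_le_sum fun b _ => hMle a b) (hPsub a)
  by_contra hcontra
  push_neg at hcontra
  -- every row reachable from i has full mass
  have hfull : ∀ m (j : Fin n), 0 < (M ^ m) i j → ∑ l, M j l = 1 := by
    intro m j hm
    exact le_antisymm (hMsub j) (hcontra m j hm)
  set R : Set (Fin n) := {j | ∃ m, 0 < (M ^ m) i j} with hR
  have hiR : i ∈ R := ⟨0, by rw [pow_zero, Matrix.one_apply_eq]; norm_num⟩
  have hrowR : ∀ j ∈ R, ∑ l, M j l = 1 := by
    rintro j ⟨m, hm⟩; exact hfull m j hm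
  have hRS : ∀ j ∈ R, j ∈ S := by
    intro j hj
    by_contra hjS
    have : ∀ l, M j l = 0 := by
      intro l
      rw [hMab, if_neg]
      intro ⟨h1, _⟩; exact hjS h1
    have h0 : ∑ l, M j l = 0 := Finset.sum_eq_zero fun l _ => this l
    rw [hrowR j hj] at h0
    norm_num at h0
  have hPM : ∀ j ∈ R, ∀ l, P j l = M j l := by
    intro j hj
    have hsum : ∑ l, (P j l - M j l) = 0 := by
      rw [Finset.sum_sub_distrib, hrowR j hj]
      have h1 : (1:ℝ) ≤ ∑ l, P j l := by
        rw [← hrowR j hj]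
        exact Finset.sum_le_sum fun l _ => hMle j l
      have h2 := hPsub j
      linarith
    intro l
    have := (Finset.sum_eq_zero_iff_of_nonneg
      (fun l _ => sub_nonneg.mpr (hMle j l))).mp hsum l (Finset.mem_univ l)
    linarith
  have hclose1 : ∀ j ∈ R, ∀ l, 0 < P j l → l ∈ R := by
    rintro j ⟨m, hm⟩ l hl
    have hMjl : 0 < M j l := by rw [← hPM j ⟨m, hm⟩ l]; exact hl
    exact ⟨m + 1, reach_trans hM0 hm (by rw [pow_one]; exact hMjl)⟩
  have hcloseK : ∀ (k : ℕ) (j : Fin n), j ∈ R → ∀ l, 0 < (P ^ k) j l → l ∈ R := by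
    intro k
    induction k with
    | zero =>
      intro j hj l hl
      have : j = l := by
        by_contra hne
        rw [pow_zero, Matrix.one_apply_ne hne] at hl
        exact lt_irrefl 0 hl
      rwa [← this]
    | succ k ih =>
      intro j hj l hl
      obtain ⟨m, hm1, hm2⟩ := exists_step hP hl
      exact hclose1 m (ih j hj m hm1) l hm2
  -- reachability finsets under P
  set preach : Fin n → Finset (Fin n) :=
    fun j => Finset.univ.filter (fun l => ∃ k, 0 < (P ^ k) j l) with hpreach
  have hself : ∀ j, j ∈ preach j := by
    intro j
    rw [hpreach]
    simp only [Finset.mem_filter, Finset.mem_univ, true_and]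
    exact ⟨0, by rw [pow_zero, Matrix.one_apply_eq]; norm_num⟩
  have hmempr : ∀ j l, l ∈ preach j ↔ ∃ k, 0 < (P ^ k) j l := by
    intro j l; rw [hpreach]; simp
  have htrans : ∀ j l, l ∈ preach j → preach l ⊆ preach j := by
    intro j l hl m hm
    obtain ⟨k1, hk1⟩ := (hmempr j l).mp hl
    obtain ⟨k2, hk2⟩ := (hmempr l m).mp hm
    exact (hmempr j m).mpr ⟨k1 + k2, reach_trans hP hk1 hk2⟩
  have hprR : ∀ j, j ∈ R → ∀ l ∈ preach j, l ∈ R := by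
    intro j hj l hl
    obtain ⟨k, hk⟩ := (hmempr j l).mp hl
    exact hcloseK k j hj l hk
  -- minimal element
  obtain ⟨js, hjs_mem, hmin⟩ := Finset.exists_min_image (preach i)
    (fun j => (preach j).card) ⟨i, hself i⟩
  have hjsR : js ∈ R := hprR i hiR js hjs_mem
  have hbot : ∀ l ∈ preach js, js ∈ preach l := by
    intro l hl
    have hlpi : l ∈ preach i := htrans i js hjs_mem hl
    have hsub : preach l ⊆ preach js := htrans js l hl
    have hcard : (preach js).card ≤ (preach l).card := hmin l hlpi
    have heq : preach l = preach js := Finset.eq_of_subset_of_card_le hsub hcard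
    rw [heq]
    exact hself js
  -- the communicating class of js
  set C : Set (Fin n) := {l | Communicates P js l} with hC
  have hCsub : ∀ l ∈ C, l ∈ preach js := by
    intro l hl
    rcases hl with heq | ⟨⟨k, _, hk⟩, _⟩
    · rw [← heq]; exact hself js
    · exact (hmempr js l).mpr ⟨k, hk⟩
  have hCS : ∀ l ∈ C, l ∈ S := fun l hl =>
    hRS l (hprR js hjsR l (hCsub l hl))
  have hnotdrain : ¬ CanBeDrained P C := by
    rintro (⟨i', hi'C, hlt⟩ | ⟨i', hi'C, j', hj'C, hpos⟩)
    · have hi'R : i' ∈ R := hprR js hjsR i' (hCsub i' hi'C)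
      have : ∑ j, P i' j = 1 := by
        rw [Finset.sum_congr rfl fun l _ => hPM i' hi'R l]
        exact hrowR i' hi'R
      linarith
    · have hi'p : i' ∈ preach js := hCsub i' hi'C
      have hj'p : j' ∈ preach js :=
        htrans js i' hi'p ((hmempr i' j').mpr ⟨1, by rw [pow_one]; exact hpos⟩)
      have hback : js ∈ preach j' := hbot j' hj'p
      apply hj'C
      by_cases hje : j' = js
      · rw [hC]; exact Or.inl hje.symm
      · rw [hC]
        refine Or.inr ⟨reach_ne hP (fun h => hje h.symm) ((hmempr js j').mp hj'p),
          reach_ne hP hje ((hmempr j' js).mp hback)⟩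
  have hfill : CanBeFilled α P C := by
    rcases hNI C ⟨js, rfl⟩ with h | h
    · exact h
    · exact absurd h hnotdrain
  obtain ⟨w, hwC, hgt⟩ := overflow α μ γ P hα hμ hP hPsub hγ hge C hfill hnotdrain
  have := hCS w hwC
  rw [hS] at this
  have : γ w < μ w := this
  linarith

/-- under NI, every supersolution `γ` exceeds `μ` somewhere on
each filled-but-undrainable class, and the stable set `S = {γ < μ}` gives
`σ(P_{SS}) < 1`. -/
theorem supersolution_overflow_and_spectral_radius (n : ℕ)
    (α μ γ : Fin n → ℝ) (P : Matrix (Fin n) (Fin n) ℝ)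
    (hα : ∀ i, 0 ≤ α i) (hμ : ∀ i, 0 < μ i)
    (hP : ∀ i j, 0 ≤ P i j) (hPsub : ∀ i, ∑ j, P i j ≤ 1)
    (hNI : NI α P)
    (hγ : ∀ i, 0 ≤ γ i)
    (hge : ∀ i, γ i ≥ α i + ∑ j, min (γ j) (μ j) * P j i) :
    (∀ C, IsCommClass P C → CanBeFilled α P C → ¬ CanBeDrained P C →
      ∃ i ∈ C, γ i > μ i) ∧
    SpecLtOne (restrict P {i | γ i < μ i}) := by
  constructor
  · intro C _ hfill hdrain
    exact overflow α μ γ P hα hμ hP hPsub hγ hge C hfill hdrain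
  · -- spectral radius part
    set S : Set (Fin n) := {i | γ i < μ i} with hS
    set M : Matrix (Fin n) (Fin n) ℝ := restrict P S with hMdef
    have hMab : ∀ a b, M a b = if a ∈ S ∧ b ∈ S then P a b else 0 := fun a b => rfl
    have hM0 : ∀ a b, 0 ≤ M a b := by
      intro a b
      rw [hMab]
      split_ifs
      · exact hP a b
      · exact le_refl 0
    have hMle : ∀ a b, M a b ≤ P a b := by
      intro a b
      rw [hMab]
      split_ifs
      · exact le_refl _
      · exact hP a b
    have hMsub : ∀ a, ∑ b, M a b ≤ 1 :=
      fun a => le_trans (Finset.sum_le_sum fun b _ => hMle a b) (hPsub a)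
    -- for each i, a power with row sum < 1, stable under larger powers
    have hKi : ∀ i : Fin n, ∃ K, 1 ≤ K ∧ ∀ N, K ≤ N → ∑ j, (M ^ N) i j < 1 := by
      intro i
      obtain ⟨m, j0, hpos, hlt⟩ := exists_leaky α μ γ P hα hμ hP hPsub hNI hγ hge i
      refine ⟨m + 1, Nat.succ_le_succ (Nat.zero_le m), fun N hN => ?_⟩
      have hbase : ∑ l, (M ^ (m + 1)) i l < 1 := leaky_step hM0 hMsub hpos hlt
      have : N = (m + 1) + (N - (m + 1)) := by omega
      rw [this]
      exact lt_of_le_of_lt (row_pow_add_le hM0 hMsub (m + 1) (N - (m + 1)) i) hbase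
    choose K hK1 hKprop using hKi
    intro z hz
    -- extract an eigenvector
    set A : Matrix (Fin n) (Fin n) ℂ := M.map Complex.ofReal with hA
    have hz' : ¬ IsUnit (algebraMap ℂ (Matrix (Fin n) (Fin n) ℂ) z - A) :=
      spectrum.mem_iff.mp hz
    have hdet : (algebraMap ℂ (Matrix (Fin n) (Fin n) ℂ) z - A).det = 0 := by
      by_contra hd
      exact hz' ((Matrix.isUnit_iff_isUnit_det _).mpr (isUnit_iff_ne_zero.mpr hd))
    obtain ⟨v, hv0, hveq⟩ := (Matrix.exists_mulVec_eq_zero_iff).mpr hdet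
    have hAv : A.mulVec v = z • v := by
      have h1 : (algebraMap ℂ (Matrix (Fin n) (Fin n) ℂ) z).mulVec v
          - A.mulVec v = 0 := by
        rw [← Matrix.sub_mulVec]; exact hveq
      have h2 : (algebraMap ℂ (Matrix (Fin n) (Fin n) ℂ) z).mulVec v = z • v := by
        rw [Algebra.algebraMap_eq_smul_one, Matrix.smul_mulVec, Matrix.one_mulVec]
      rw [h2] at h1
      exact (sub_eq_zero.mp h1).symm
    have hApow : ∀ k, (A ^ k).mulVec v = (z ^ k) • v := by
      intro k
      induction k with
      | zero => rw [pow_zero, pow_zero, Matrix.one_mulVec, one_smul]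
      | succ k ih =>
        rw [pow_succ', ← Matrix.mulVec_mulVec, ih, Matrix.mulVec_smul, hAv,
          smul_smul, ← pow_succ]
    have hmapow : ∀ k, A ^ k = (M ^ k).map Complex.ofReal := by
      intro k
      induction k with
      | zero =>
        rw [pow_zero, pow_zero]
        exact (Matrix.map_one _ Complex.ofReal_zero Complex.ofReal_one).symm
      | succ k ih =>
        rw [pow_succ, pow_succ, ih]
        exact (Matrix.map_mul (L := M ^ k) (M := M) (f := Complex.ofRealHom)).symm
    -- the index with maximal |v|
    obtain ⟨i1, hi1⟩ := Function.ne_iff.mp hv0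
    obtain ⟨i0, _, hmax⟩ := Finset.exists_max_image Finset.univ
      (fun i => ‖v i‖) ⟨i1, Finset.mem_univ i1⟩
    have hvpos : 0 < ‖v i0‖ :=
      lt_of_lt_of_le (norm_pos_iff.mpr hi1) (hmax i1 (Finset.mem_univ i1))
    -- uniform K
    set Km : ℕ := Finset.univ.sup K with hKm
    have hKm1 : 1 ≤ Km := le_trans (hK1 i1) (Finset.le_sup (Finset.mem_univ i1))
    have hKmrow : ∀ i, ∑ j, (M ^ Km) i j < 1 := fun i =>
      hKprop i Km (Finset.le_sup (Finset.mem_univ i))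
    -- the estimate
    have hest : ‖z‖ ^ Km * ‖v i0‖ < ‖v i0‖ := by
      have h1 : ‖z‖ ^ Km * ‖v i0‖
          = ‖((A ^ Km).mulVec v) i0‖ := by
        rw [hApow Km]
        simp [norm_smul, norm_pow]
      have h2 : ((A ^ Km).mulVec v) i0 = ∑ j, ((M ^ Km) i0 j : ℂ) * v j := by
        rw [hmapow Km]
        simp [Matrix.mulVec, dotProduct, Matrix.map_apply]
      have h3 : ‖∑ j, ((M ^ Km) i0 j : ℂ) * v j‖
          ≤ ∑ j, (M ^ Km) i0 j * ‖v j‖ := by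
        refine le_trans (norm_sum_le _ _) (le_of_eq ?_)
        apply Finset.sum_congr rfl
        intro j _
        rw [norm_mul, Complex.norm_real, Real.norm_eq_abs, abs_of_nonneg (pow_entry_nonneg hM0 Km i0 j)]
      have h4 : ∑ j, (M ^ Km) i0 j * ‖v j‖
          ≤ ∑ j, (M ^ Km) i0 j * ‖v i0‖ :=
        Finset.sum_le_sum fun j _ =>
          mul_le_mul_of_nonneg_left (hmax j (Finset.mem_univ j))
            (pow_entry_nonneg hM0 Km i0 j)
      have h5 : ∑ j, (M ^ Km) i0 j * ‖v i0‖
          = (∑ j, (M ^ Km) i0 j) * ‖v i0‖ := by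
        rw [Finset.sum_mul]
      have h6 : (∑ j, (M ^ Km) i0 j) * ‖v i0‖ < 1 * ‖v i0‖ :=
        (mul_lt_mul_iff_left₀ hvpos).mpr (hKmrow i0)
      calc ‖z‖ ^ Km * ‖v i0‖
          = ‖((A ^ Km).mulVec v) i0‖ := h1
        _ = ‖∑ j, ((M ^ Km) i0 j : ℂ) * v j‖ := by rw [h2]
        _ ≤ ∑ j, (M ^ Km) i0 j * ‖v j‖ := h3
        _ ≤ ∑ j, (M ^ Km) i0 j * ‖v i0‖ := h4
        _ = (∑ j, (M ^ Km) i0 j) * ‖v i0‖ := h5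
        _ < 1 * ‖v i0‖ := h6
        _ = ‖v i0‖ := one_mul _
    have hzK : ‖z‖ ^ Km < 1 := by
      by_contra hge1
      push_neg at hge1
      have h7 : 1 * ‖v i0‖ ≤ ‖z‖ ^ Km * ‖v i0‖ :=
        mul_le_mul_of_nonneg_right hge1 hvpos.le
      rw [one_mul] at h7
      linarith
    have : ‖z‖ ^ Km < 1 ^ Km := by rwa [one_pow]
    exact lt_of_pow_lt_pow_left₀ Km zero_le_one this
end

section
/- Consider the 3-node network with α = (1, 0, 0), μ = (4/3, 2/3, 1), routing matrix P with rows (0, 1/2, 0), (1/2, 0, 0), (1/2, 1/2, 0), and overflow matrix Q with rows (0, 1/2, 1/2), (1/2, 0, 1/2), (0, 0, 0). Then for every ε ∈ [0, 1], the vector λ = (4/3 + ε, 2/3 + ε, ε) solves the overflow traffic equation λ = α + (λ ∧ μ)P + (λ − μ)⁺Q; in particular the equation has infinitely many solutions. -/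
/-!
For `ε ∈ [0, 1]` the first two stations are overloaded by exactly `ε` and the third is not
saturated, so `λ ∧ μ = (4/3, 2/3, ε)` and `(λ - μ)⁺ = (ε, ε, 0)`. With these values the
equation becomes linear in `ε` and holds identically; as `ε ↦ λ` is injective, the segment
`[0, 1]` yields infinitely many solutions.
-/

open Set

def overflowTraffic {ι : Type*} [Fintype ι] (α μ : ι → ℝ) (P Q : Matrix ι ι ℝ) (lam : ι → ℝ) :
    ι → ℝ :=
  fun i => α i + ∑ j, min (lam j) (μ j) * P j i + ∑ j, max (lam j - μ j) 0 * Q j i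

noncomputable section

namespace Example4

def α : Fin 3 → ℝ := ![1, 0, 0]

def μ : Fin 3 → ℝ := ![4/3, 2/3, 1]

def P : Matrix (Fin 3) (Fin 3) ℝ := !![0, 1/2, 0; 1/2, 0, 0; 1/2, 1/2, 0]

def Q : Matrix (Fin 3) (Fin 3) ℝ := !![0, 1/2, 1/2; 1/2, 0, 1/2; 0, 0, 0]

def solution (ε : ℝ) : Fin 3 → ℝ := ![4/3 + ε, 2/3 + ε, ε]

theorem solution_injective : Function.Injective solution := fun a b h => by
  simpa [solution] using congrFun h 2

variable {ε : ℝ}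

theorem min_solution_mu (h0 : 0 ≤ ε) (h1 : ε ≤ 1) :
    (fun j => min (solution ε j) (μ j)) = ![4/3, 2/3, ε] := by
  ext j
  fin_cases j <;> simp [solution, μ, h0, h1]

theorem posPart_solution_sub_mu (h0 : 0 ≤ ε) (h1 : ε ≤ 1) :
    (fun j => max (solution ε j - μ j) 0) = ![ε, ε, 0] := by
  ext j
  fin_cases j <;> simp [solution, μ, h0, h1]

theorem overflowTraffic_solution (h0 : 0 ≤ ε) (h1 : ε ≤ 1) :
    overflowTraffic α μ P Q (solution ε) = solution ε := by
  have hmin := congrFun (min_solution_mu h0 h1)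
  have hpos := congrFun (posPart_solution_sub_mu h0 h1)
  ext i
  simp only [overflowTraffic, hmin, hpos]
  fin_cases i <;> simp [α, P, Q, solution, Fin.sum_univ_three] <;> ring

end Example4

end

/-- Example 4 with `α₁ = 1`: for every `ε ∈ [0,1]` the vector
`(4/3 + ε, 2/3 + ε, ε)` solves the overflow traffic equation; in particular
the equation has infinitely many solutions. -/
theorem example4_critical_infinitely_many_solutions :
    let α : Fin 3 → ℝ := ![1, 0, 0]
    let μ : Fin 3 → ℝ := ![4/3, 2/3, 1]
    let P : Matrix (Fin 3) (Fin 3) ℝ := !![0, 1/2, 0; 1/2, 0, 0; 1/2, 1/2, 0]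
    let Q : Matrix (Fin 3) (Fin 3) ℝ := !![0, 1/2, 1/2; 1/2, 0, 1/2; 0, 0, 0]
    (∀ ε : ℝ, 0 ≤ ε → ε ≤ 1 →
      ∀ i, (![4/3 + ε, 2/3 + ε, ε] : Fin 3 → ℝ) i
        = α i + ∑ j, min ((![4/3 + ε, 2/3 + ε, ε] : Fin 3 → ℝ) j) (μ j) * P j i
          + ∑ j, max ((![4/3 + ε, 2/3 + ε, ε] : Fin 3 → ℝ) j - μ j) 0 * Q j i) ∧
    {lam : Fin 3 → ℝ |
      ∀ i, lam i = α i + ∑ j, min (lam j) (μ j) * P j i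
        + ∑ j, max (lam j - μ j) 0 * Q j i}.Infinite := by
  intro α μ P Q
  have hsolves : ∀ ε : ℝ, 0 ≤ ε → ε ≤ 1 →
      ∀ i, Example4.solution ε i = overflowTraffic α μ P Q (Example4.solution ε) i :=
    fun ε h0 h1 i => (congrFun (Example4.overflowTraffic_solution h0 h1) i).symm
  refine ⟨hsolves, ((Icc_infinite zero_lt_one).image Example4.solution_injective.injOn).mono ?_⟩
  rintro _ ⟨ε, ⟨h0, h1⟩, rfl⟩
  exact hsolves ε h0 h1
end
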